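/- Let F be an endofunctor on Set and L a lax F-lifting, and let λ^L be defined by λ^L_Z := χ_{L(∋_Z)}. If L is diagonal-preserving, then λ^L is laxly extensional, i.e., λ^L_Z ∘ F η_Z ≤ η_{F Z} for all Z. If L is symmetric, then λ^L is symmetric, i.e., (λ^L_Y ∘ F f)^♭ = λ^L_X ∘ F (f^♭) for all f : X → P Y. -/

import Mathlib

universe u v

open CategoryTheory

/-- Relational composition (as `Rel.comp` was defined in the older Mathlib). -/
def Rel.comp {α β γ : Type*} (r : Rel α β) (s : Rel β γ) : Rel α γ :=
  fun x z => ∃ y, r x y ∧ s y z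

/-- Converse relation (as `Rel.inv` was defined in the older Mathlib). -/
def Rel.inv {α β : Type*} (r : Rel α β) : Rel β α := flip r

/-- The graph of a function, as a relation. -/
def gr {X Y : Type u} (f : X → Y) : Rel X Y := fun x y => f x = y

/-- A lax lifting of an endofunctor `F` on `Set` to relations: monotone, laxly
functorial, and laxly extending graphs and converse graphs. -/
structure LaxLifting (F : Type u ⥤ Type u) : Type (u + 1) where
  map : ∀ {X Y : Type u}, Rel X Y → Rel (F.obj X) (F.obj Y)
  mono : ∀ {X Y : Type u} {R S : Rel X Y}, R ≤ S → map R ≤ map S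
  laxComp : ∀ {X Y Z : Type u} (R : Rel X Y) (S : Rel Y Z),
    (map R).comp (map S) ≤ map (R.comp S)
  graph_le : ∀ {X Y : Type u} (f : X → Y), gr (F.map (↾f)) ≤ map (gr f)
  graphInv_le : ∀ {X Y : Type u} (f : X → Y), (gr (F.map (↾f))).inv ≤ map (gr f).inv

/-- Pointwise order on lax liftings. -/
def LiftLE {F : Type u ⥤ Type u} (L L' : LaxLifting F) : Prop :=
  ∀ (X Y : Type u) (R : Rel X Y), L.map R ≤ L'.map R

/-- A lax distributive law of \`F\` over the powerset monad: a family of maps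
\`λ_X : F (P X) → P (F X)\` that is monotone, laxly natural, and laxly compatible
with the unit and multiplication of the powerset monad. -/
structure LaxDistLaw (F : Type u ⥤ Type u) : Type (u + 1) where
  app : ∀ Z : Type u, F.obj (Set Z) → Set (F.obj Z)
  mono : ∀ (X Y : Type u) (f g : X → Set Y), (∀ x, f x ⊆ g x) →
    ∀ a : F.obj X, app Y (F.map (↾f) a) ⊆ app Y (F.map (↾g) a)
  laxNat : ∀ (X Y : Type u) (f : X → Set Y) (a : F.obj (Set X)),
    F.map (↾f) '' app X a ⊆ app (Set Y) (F.map (↾(Set.image f)) a)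
  laxMul : ∀ (Z : Type u) (a : F.obj (Set (Set Z))),
    ⋃₀ (app Z '' app (Set Z) a) ⊆ app Z (F.map (↾Set.sUnion) a)
  laxUnit : ∀ (Z : Type u) (a : F.obj Z),
    a ∈ app Z (F.map (↾(fun z => ({z} : Set Z))) a)

/-- The Kleisli map \`χ_R : X → P Y\` associated to a relation \`R : X ⇸ Y\`. -/
def chi {X Y : Type u} (R : Rel X Y) : X → Set Y := fun x => {y | R x y}

/-- The membership relation \`∋_Z : P Z ⇸ Z\`. -/
def memRel (Z : Type u) : Rel (Set Z) Z := fun A z => z ∈ A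

/-- The lifting assignment \`L^λ\` induced by a distributive-law-shaped family:
\`L^λ R := ⌊λ_Y ∘ F χ_R⌋\`. -/
def toLiftMap (F : Type u ⥤ Type u) (lam : ∀ Z : Type u, F.obj (Set Z) → Set (F.obj Z)) :
    ∀ X Y : Type u, Rel X Y → Rel (F.obj X) (F.obj Y) :=
  fun X Y R a b => b ∈ lam Y (F.map (↾(chi R)) a)

/-- The distributive-law-shaped family \`λ^L\` induced by a lifting assignment:
\`λ^L_Z := χ_{L(∋_Z)}\`. -/
def toLawMap (F : Type u ⥤ Type u)
    (Lm : ∀ X Y : Type u, Rel X Y → Rel (F.obj X) (F.obj Y)) :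
    ∀ Z : Type u, F.obj (Set Z) → Set (F.obj Z) :=
  fun Z a => {b | Lm (Set Z) Z (memRel Z) a b}
/-- The converse of a Kleisli map: `f^♭(y) = {x | y ∈ f x}`. -/
def flat {A B : Type u} (f : A → Set B) : B → Set A := fun b => {a | b ∈ f a}

/-!
The key fact is that `λ^L` recovers `L`: for every Kleisli map `f : X → P Y`,
`λ^L_Y ∘ F f = χ_{L ⌊f⌋}`, where `⌊f⌋ = kleisliRel f` relates `x` to `y ∈ f x`. One inclusion
composes `gr (F f) ⊆ L (gr f)` with `L (∋)`, using `gr f ; ∋ = ⌊f⌋`; the other composes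
`(gr (F f))° ⊆ L ((gr f)°)` with `L ⌊f⌋`, using `(gr f)° ; ⌊f⌋ ⊆ ∋`.
Both claims then reduce to statements about `L` itself: `⌊η⌋` is the diagonal, and
`⌊f^♭⌋ = ⌊f⌋°`.
-/

def kleisliRel {X Y : Type u} (f : X → Set Y) : Rel X Y := fun x y => y ∈ f x

theorem kleisliRel_flat {X Y : Type u} (f : X → Set Y) :
    kleisliRel (flat f) = Rel.inv (kleisliRel f) :=
  rfl

namespace LaxLifting

variable {F : Type u ⥤ Type u} (L : LaxLifting F)

theorem map_kleisliRel_of_map_memRel {X Y : Type u} (f : X → Set Y) {a : F.obj X}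
    {b : F.obj Y} (h : L.map (memRel Y) (F.map (↾f) a) b) : L.map (kleisliRel f) a b := by
  have hgraph : L.map (gr f) a (F.map (↾f) a) := L.graph_le f a _ rfl
  refine L.mono ?_ a b (L.laxComp _ _ a b ⟨_, hgraph, h⟩)
  rintro x y ⟨_, rfl, hy⟩
  exact hy

theorem map_memRel_of_map_kleisliRel {X Y : Type u} (f : X → Set Y) {a : F.obj X}
    {b : F.obj Y} (h : L.map (kleisliRel f) a b) : L.map (memRel Y) (F.map (↾f) a) b := by
  have hgraphInv : L.map (gr f).inv (F.map (↾f) a) a := L.graphInv_le f _ a rfl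
  refine L.mono ?_ _ b (L.laxComp _ _ _ b ⟨a, hgraphInv, h⟩)
  rintro A y ⟨x, rfl, hy⟩
  exact hy

theorem toLawMap_map {X Y : Type u} (f : X → Set Y) (a : F.obj X) :
    toLawMap F (fun X Y => L.map (X := X) (Y := Y)) Y (F.map (↾f) a) =
      chi (L.map (kleisliRel f)) a :=
  Set.ext fun _ => ⟨L.map_kleisliRel_of_map_memRel f, L.map_memRel_of_map_kleisliRel f⟩

end LaxLifting

/-- If `L` is diagonal-preserving then `λ^L` is laxly extensional; if `L` is
symmetric then `λ^L` is symmetric. -/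
theorem toLawMap_extensional_and_symmetric (F : Type u ⥤ Type u) (L : LaxLifting F) :
    ((∀ (X : Type u) (a b : F.obj X), L.map (fun x y : X => x = y) a b → a = b) →
      ∀ (Z : Type u) (a : F.obj Z),
        toLawMap F (fun X Y => L.map (X := X) (Y := Y)) Z
            (F.map (↾(fun z => ({z} : Set Z))) a) ⊆ {a}) ∧
    ((∀ (X Y : Type u) (R : Rel X Y), L.map R.inv = (L.map R).inv) →
      ∀ (X Y : Type u) (f : X → Set Y),
        flat (fun a : F.obj X =>
            toLawMap F (fun X Y => L.map (X := X) (Y := Y)) Y (F.map (↾f) a)) =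
          fun b : F.obj Y =>
            toLawMap F (fun X Y => L.map (X := X) (Y := Y)) X (F.map (↾(flat f)) b)) := by
  constructor
  · intro hdiag Z a b hb
    rw [L.toLawMap_map] at hb
    have hdiagonal : L.map (fun x y : Z => x = y) a b := L.mono (fun _ _ h => h.symm) a b hb
    exact (hdiag Z a b hdiagonal).symm
  · intro hsymm X Y f
    have hflat : flat (chi (L.map (kleisliRel f))) = chi (L.map (kleisliRel (flat f))) := by
      rw [kleisliRel_flat, hsymm]
      rfl
    simpa only [L.toLawMap_map] using hflat
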